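/- Fix any direction (a,b) ∈ ℝ² and consider the vertex perturbation p_t = (1/2 + t·a, √3/2 + t·b) of the apex of the equilateral triangle with vertices (0,0), (1,0), (1/2, √3/2). Let A(t) := (√3/2 + t·b)/2 be the area and P(t) := 1 + √((1/2 + t·a)² + (√3/2 + t·b)²) + √((t·a − 1/2)² + (√3/2 + t·b)²) the perimeter of the triangle with vertices (0,0), (1,0), p_t. Then the function t ↦ P(t)²/A(t) is differentiable at t = 0 and its derivative there equals 0. -/

import Mathlib

/-- Area of the triangle with vertices `(0,0)`, `(1,0)`, `(1/2 + t a, √3/2 + t b)`. -/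
noncomputable def A9 (b t : ℝ) : ℝ := (Real.sqrt 3 / 2 + t * b) / 2

/-- Perimeter of the triangle with vertices `(0,0)`, `(1,0)`, `(1/2 + t a, √3/2 + t b)`. -/
noncomputable def P9 (a b t : ℝ) : ℝ :=
  1 + Real.sqrt ((1 / 2 + t * a) ^ 2 + (Real.sqrt 3 / 2 + t * b) ^ 2)
    + Real.sqrt ((t * a - 1 / 2) ^ 2 + (Real.sqrt 3 / 2 + t * b) ^ 2)

/-- The scale-invariant functional `P²/A` is stationary at the equilateral triangle
under any vertex perturbation of the apex. -/
theorem statement9 (a b : ℝ) :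
    HasDerivAt (fun t => (P9 a b t) ^ 2 / A9 b t) 0 0 := by
  have s3 : Real.sqrt 3 * Real.sqrt 3 = 3 := Real.mul_self_sqrt (by norm_num)
  have s3pos : (0:ℝ) < Real.sqrt 3 := Real.sqrt_pos.mpr (by norm_num)
  have h1 : HasDerivAt (fun t : ℝ => 1/2 + t*a) a 0 := by
    have h : HasDerivAt (fun t : ℝ => 1/2 + t*a) (0 + 1*a) 0 :=
      (hasDerivAt_const _ _).add ((hasDerivAt_id _).mul_const a)
    rwa [zero_add, one_mul] at h
  have h1' : HasDerivAt (fun t : ℝ => t*a - 1/2) a 0 := by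
    have h : HasDerivAt (fun t : ℝ => t*a - 1/2) (1*a - 0) 0 :=
      ((hasDerivAt_id _).mul_const a).sub (hasDerivAt_const _ _)
    rwa [sub_zero, one_mul] at h
  have h2 : HasDerivAt (fun t : ℝ => Real.sqrt 3/2 + t*b) b 0 := by
    have h : HasDerivAt (fun t : ℝ => Real.sqrt 3/2 + t*b) (0 + 1*b) 0 :=
      (hasDerivAt_const _ _).add ((hasDerivAt_id _).mul_const b)
    rwa [zero_add, one_mul] at h
  have hval : (1/2 + (0:ℝ)*a)^2 + (Real.sqrt 3/2 + 0*b)^2 = 1 := by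
    nlinarith [Real.sq_sqrt (show (0:ℝ) ≤ 3 by norm_num)]
  have hval' : ((0:ℝ)*a - 1/2)^2 + (Real.sqrt 3/2 + 0*b)^2 = 1 := by
    nlinarith [Real.sq_sqrt (show (0:ℝ) ≤ 3 by norm_num)]
  have hu : HasDerivAt (fun t : ℝ => (1/2 + t*a)^2 + (Real.sqrt 3/2 + t*b)^2)
      (a + Real.sqrt 3 * b) 0 := by
    have h := (h1.fun_pow 2).fun_add (h2.fun_pow 2)
    refine h.congr_deriv ?_
    push_cast
    ring
  have hv : HasDerivAt (fun t : ℝ => (t*a - 1/2)^2 + (Real.sqrt 3/2 + t*b)^2)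
      (-a + Real.sqrt 3 * b) 0 := by
    have h := (h1'.fun_pow 2).fun_add (h2.fun_pow 2)
    refine h.congr_deriv ?_
    push_cast
    ring
  have hsu : HasDerivAt (fun t : ℝ => Real.sqrt ((1/2 + t*a)^2 + (Real.sqrt 3/2 + t*b)^2))
      ((a + Real.sqrt 3 * b) / 2) 0 := by
    have h := hu.sqrt (by rw [hval]; norm_num)
    simp only [hval, Real.sqrt_one, mul_one] at h
    exact h
  have hsv : HasDerivAt (fun t : ℝ => Real.sqrt ((t*a - 1/2)^2 + (Real.sqrt 3/2 + t*b)^2))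
      ((-a + Real.sqrt 3 * b) / 2) 0 := by
    have h := hv.sqrt (by rw [hval']; norm_num)
    simp only [hval', Real.sqrt_one, mul_one] at h
    exact h
  have hP : HasDerivAt (P9 a b) (Real.sqrt 3 * b) 0 := by
    have h := (hsu.const_add 1).add hsv
    have e : ((a + Real.sqrt 3 * b)/2 + (-a + Real.sqrt 3 * b)/2) = Real.sqrt 3 * b := by ring
    rw [e] at h
    exact h
  have hA : HasDerivAt (A9 b) (b/2) 0 := by
    have h := h2.div_const 2
    exact h
  have hP0 : P9 a b 0 = 3 := by
    simp only [P9]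
    rw [hval, hval']
    norm_num
  have hA0 : A9 b 0 = Real.sqrt 3 / 4 := by simp [A9]; ring
  have hA0ne : A9 b 0 ≠ 0 := by rw [hA0]; positivity
  have h := (hP.fun_pow 2).fun_div hA hA0ne
  refine h.congr_deriv ?_
  rw [hP0, hA0]
  push_cast
  field_simp
  linear_combination (48*b) * Real.sq_sqrt (show (0:ℝ) ≤ 3 by norm_num)
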